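/- arXiv:2208.09385 — 5 statements merged into one kernel-verified Lean document; each statement's English description precedes it below -/
import Mathlib

section
/- Let ρ be a density matrix on ℂ^d with ρ ≠ I/d, and let E be a linear, trace-preserving, unital, completely positive map on d×d matrices such that E(σ) is positive definite for every density matrix σ. Then tr[E(ρ)²] < tr[ρ²], i.e., the purity strictly decreases. -/
/-!
Write `ρ = ∑ pᵢ Pᵢ` with `Pᵢ` the rank-one spectral projections of `ρ`, so that `tr ρ² = ∑ pᵢ²`
and `tr E(ρ)² = ∑ᵢⱼ rᵢⱼ pᵢ pⱼ` with `rᵢⱼ = tr (E(Pᵢ) E(Pⱼ))`. Since `∑ Pᵢ = 1`, unitality and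
trace preservation make `r` doubly stochastic, and since each `E(Pᵢ)` is positive definite every
`rᵢⱼ` is positive. Hence `2 (tr ρ² - tr E(ρ)²) = ∑ᵢⱼ rᵢⱼ (pᵢ - pⱼ)² > 0` as soon as two eigenvalues
of `ρ` differ, which is the case unless `ρ = I/d`.
-/

open Matrix ComplexOrder

/-- A density matrix: positive semidefinite with unit trace. -/
def IsDensityMatrix {d : ℕ} (ρ : Matrix (Fin d) (Fin d) ℂ) : Prop :=
  ρ.PosSemidef ∧ ρ.trace = 1

/-- The amplification `id ⊗ E` of a linear map `E` on `d × d` matrices, acting on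
`(k·d) × (k·d)` matrices blockwise. -/
noncomputable def amplify {d k : ℕ}
    (E : Matrix (Fin d) (Fin d) ℂ →ₗ[ℂ] Matrix (Fin d) (Fin d) ℂ)
    (M : Matrix (Fin k × Fin d) (Fin k × Fin d) ℂ) :
    Matrix (Fin k × Fin d) (Fin k × Fin d) ℂ :=
  Matrix.of fun p q => E (Matrix.of fun i j => M (p.1, i) (q.1, j)) p.2 q.2

/-- Complete positivity: every amplification `id_k ⊗ E` preserves positive semidefiniteness. -/
def IsCompletelyPositive {d : ℕ}
    (E : Matrix (Fin d) (Fin d) ℂ →ₗ[ℂ] Matrix (Fin d) (Fin d) ℂ) : Prop :=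
  ∀ (k : ℕ) (M : Matrix (Fin k × Fin d) (Fin k × Fin d) ℂ),
    M.PosSemidef → (amplify E M).PosSemidef

section DoublyStochastic

variable {ι : Type*} [Fintype ι] {M : ι → ι → ℝ}

theorem two_mul_sum_sq_sub_sum_mul_mul (hrow : ∀ i, ∑ j, M i j = 1) (hcol : ∀ j, ∑ i, M i j = 1)
    (p : ι → ℝ) :
    2 * (∑ i, p i ^ 2 - ∑ i, ∑ j, M i j * p i * p j) = ∑ i, ∑ j, M i j * (p i - p j) ^ 2 := by
  have hrow' : ∑ i, ∑ j, M i j * p i ^ 2 = ∑ i, p i ^ 2 := by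
    simp [← Finset.sum_mul, hrow]
  have hcol' : ∑ i, ∑ j, M i j * p j ^ 2 = ∑ j, p j ^ 2 := by
    rw [Finset.sum_comm]
    simp [← Finset.sum_mul, hcol]
  have hexpand (i j : ι) :
      M i j * (p i - p j) ^ 2 = M i j * p i ^ 2 + M i j * p j ^ 2 - 2 * (M i j * p i * p j) := by
    ring
  simp only [hexpand, Finset.sum_sub_distrib, Finset.sum_add_distrib, ← Finset.mul_sum, hrow',
    hcol']
  ring

theorem sum_mul_mul_lt_sum_sq (hpos : ∀ i j, 0 < M i j) (hrow : ∀ i, ∑ j, M i j = 1)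
    (hcol : ∀ j, ∑ i, M i j = 1) {p : ι → ℝ} {i₀ j₀ : ι} (hp : p i₀ ≠ p j₀) :
    ∑ i, ∑ j, M i j * p i * p j < ∑ i, p i ^ 2 := by
  have hterm (i j : ι) : 0 ≤ M i j * (p i - p j) ^ 2 := by
    have := hpos i j
    positivity
  have hterm₀ : 0 < M i₀ j₀ * (p i₀ - p j₀) ^ 2 := by
    have := hpos i₀ j₀
    have := sub_ne_zero.2 hp
    positivity
  have hsum : 0 < ∑ i, ∑ j, M i j * (p i - p j) ^ 2 :=
    Finset.sum_pos' (fun i _ => Finset.sum_nonneg fun j _ => hterm i j)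
      ⟨i₀, Finset.mem_univ _, Finset.sum_pos' (fun j _ => hterm i₀ j) ⟨j₀, Finset.mem_univ _, hterm₀⟩⟩
  linarith [two_mul_sum_sq_sub_sum_mul_mul hrow hcol p]

end DoublyStochastic

namespace Matrix

variable {n ι 𝕜 : Type*} [Fintype n] [Fintype ι] [RCLike 𝕜]

-- `tr (A * B) = 1ᴴ (A ⊙ Bᵀ) 1`, and `A ⊙ Bᵀ` is positive definite by the Schur product theorem.
theorem PosDef.trace_mul_pos [Nonempty n] {A B : Matrix n n 𝕜} (hA : A.PosDef) (hB : B.PosDef) :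
    0 < (A * B).trace := by
  convert (hA.hadamard hB.transpose).dotProduct_mulVec_pos (one_ne_zero (α := n → 𝕜)) using 1
  simp [trace, mul_apply, dotProduct, mulVec]

theorem re_trace_sum_smul_mul_sum_smul (p : ι → ℝ) (Q : ι → Matrix n n 𝕜) :
    RCLike.re ((∑ i, (p i : 𝕜) • Q i) * ∑ j, (p j : 𝕜) • Q j).trace =
      ∑ i, ∑ j, RCLike.re (Q i * Q j).trace * p i * p j := by
  simp only [Finset.sum_mul_sum, trace_sum, smul_mul_smul_comm, trace_smul, smul_eq_mul, map_sum]
  refine Finset.sum_congr rfl fun i _ => Finset.sum_congr rfl fun j _ => ?_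
  rw [← RCLike.ofReal_mul, RCLike.re_ofReal_mul]
  ring

theorem re_trace_sum_smul_mul_sum_smul_lt [DecidableEq n] [Nonempty n] {Q : ι → Matrix n n 𝕜}
    (hQ : ∀ i, (Q i).PosDef) (hsum : ∑ i, Q i = 1) (htr : ∀ i, (Q i).trace = 1)
    {p : ι → ℝ} {i₀ j₀ : ι} (hp : p i₀ ≠ p j₀) :
    RCLike.re ((∑ i, (p i : 𝕜) • Q i) * ∑ j, (p j : 𝕜) • Q j).trace < ∑ i, p i ^ 2 := by
  rw [re_trace_sum_smul_mul_sum_smul]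
  refine sum_mul_mul_lt_sum_sq (fun i j => (RCLike.pos_iff.1 ((hQ i).trace_mul_pos (hQ j))).1)
    (fun i => ?_) (fun j => ?_) hp
  · rw [← map_sum, ← trace_sum, ← Finset.mul_sum, hsum, mul_one, htr, RCLike.one_re]
  · rw [← map_sum, ← trace_sum, ← Finset.sum_mul, hsum, one_mul, htr, RCLike.one_re]

variable [DecidableEq n]

theorem sum_smul_diagonal_single (f : n → 𝕜) :
    ∑ i, f i • diagonal (Pi.single i 1) = diagonal f := by
  ext j k
  simp [sum_apply, diagonal_apply, Pi.single_apply]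

theorem trace_conjStarAlgAut (u : unitaryGroup n 𝕜) (X : Matrix n n 𝕜) :
    (Unitary.conjStarAlgAut 𝕜 _ u X).trace = X.trace := by
  rw [Unitary.conjStarAlgAut_apply, trace_mul_cycle, Unitary.coe_star_mul_self, one_mul]

namespace IsHermitian

variable {A : Matrix n n 𝕜} (hA : A.IsHermitian)

-- The orthogonal projection onto the line spanned by `hA.eigenvectorBasis i`.
noncomputable def eigenprojection (i : n) : Matrix n n 𝕜 :=
  Unitary.conjStarAlgAut 𝕜 _ hA.eigenvectorUnitary (diagonal (Pi.single i 1))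

theorem sum_smul_eigenprojection (f : n → 𝕜) :
    ∑ i, f i • hA.eigenprojection i =
      Unitary.conjStarAlgAut 𝕜 _ hA.eigenvectorUnitary (diagonal f) := by
  simp only [eigenprojection, ← map_smul, ← map_sum, sum_smul_diagonal_single]

theorem sum_eigenprojection : ∑ i, hA.eigenprojection i = 1 := by
  simpa [diagonal_one'] using hA.sum_smul_eigenprojection 1

theorem sum_eigenvalues_smul_eigenprojection :
    ∑ i, (hA.eigenvalues i : 𝕜) • hA.eigenprojection i = A :=
  (hA.sum_smul_eigenprojection _).trans hA.spectral_theorem.symm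

theorem map_eq_sum_eigenvalues_smul {M : Type*} [AddCommMonoid M] [Module 𝕜 M]
    (E : Matrix n n 𝕜 →ₗ[𝕜] M) :
    E A = ∑ i, (hA.eigenvalues i : 𝕜) • E (hA.eigenprojection i) := by
  conv_lhs => rw [← hA.sum_eigenvalues_smul_eigenprojection]
  simp only [map_sum, map_smul]

theorem posSemidef_eigenprojection (i : n) : (hA.eigenprojection i).PosSemidef := by
  rw [eigenprojection, Unitary.conjStarAlgAut_apply, star_eq_conjTranspose]
  exact (PosSemidef.diagonal (Pi.single_nonneg.2 zero_le_one)).mul_mul_conjTranspose_same _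

theorem trace_eigenprojection (i : n) : (hA.eigenprojection i).trace = 1 := by
  rw [eigenprojection, trace_conjStarAlgAut]
  simp [trace_diagonal]

theorem re_trace_mul_self : RCLike.re (A * A).trace = ∑ i, hA.eigenvalues i ^ 2 := by
  conv_lhs => rw [hA.spectral_theorem, ← map_mul, trace_conjStarAlgAut, diagonal_mul_diagonal]
  simp [trace_diagonal, sq]

theorem eq_smul_one_of_eigenvalues_eq {c : ℝ} (h : ∀ i, hA.eigenvalues i = c) :
    A = (c : 𝕜) • 1 := by
  rw [← hA.sum_eigenvalues_smul_eigenprojection, ← hA.sum_eigenprojection, Finset.smul_sum]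
  simp [h]

theorem exists_eigenvalues_ne (htr : A.trace = 1) (hne : A ≠ (Fintype.card n : 𝕜)⁻¹ • 1) :
    ∃ i j, hA.eigenvalues i ≠ hA.eigenvalues j := by
  by_contra! h
  have hsum : ∑ i, hA.eigenvalues i = 1 := by
    exact_mod_cast hA.trace_eq_sum_eigenvalues.symm.trans htr
  have hc (i : n) : hA.eigenvalues i = (Fintype.card n : ℝ)⁻¹ := by
    refine eq_inv_of_mul_eq_one_right ?_
    rw [← hsum, Finset.sum_congr rfl fun j _ => h j i, Finset.sum_const, Finset.card_univ,
      nsmul_eq_mul]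
  exact hne (by simpa using hA.eq_smul_one_of_eigenvalues_eq hc)

end IsHermitian

end Matrix

theorem purity_strict_decrease_general (d : ℕ)
    (ρ : Matrix (Fin d) (Fin d) ℂ)
    (hρ : IsDensityMatrix ρ)
    (hρne : ρ ≠ ((d : ℂ))⁻¹ • (1 : Matrix (Fin d) (Fin d) ℂ))
    (E : Matrix (Fin d) (Fin d) ℂ →ₗ[ℂ] Matrix (Fin d) (Fin d) ℂ)
    (hTP : ∀ A, (E A).trace = A.trace)
    (hUnital : E 1 = 1)
    (hPD : ∀ σ, IsDensityMatrix σ → (E σ).PosDef) :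
    ((E ρ * E ρ).trace).re < ((ρ * ρ).trace).re := by
  have hH : ρ.IsHermitian := hρ.1.isHermitian
  set P := hH.eigenprojection
  obtain ⟨i₀, j₀, hne⟩ := hH.exists_eigenvalues_ne hρ.2 (by simpa using hρne)
  have : Nonempty (Fin d) := ⟨i₀⟩
  have hQ (i : Fin d) : (E (P i)).PosDef :=
    hPD _ ⟨hH.posSemidef_eigenprojection i, hH.trace_eigenprojection i⟩
  have hQsum : ∑ i, E (P i) = 1 := by rw [← map_sum, hH.sum_eigenprojection, hUnital]
  have hQtr (i : Fin d) : (E (P i)).trace = 1 := by rw [hTP, hH.trace_eigenprojection]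
  rw [hH.map_eq_sum_eigenvalues_smul E]
  exact (re_trace_sum_smul_mul_sum_smul_lt hQ hQsum hQtr hne).trans_eq hH.re_trace_mul_self.symm

/-- Strict purity decrease: a unital, trace-preserving, completely positive map whose
outputs on density matrices are positive definite strictly decreases the purity of any
state other than the maximally mixed state. -/
theorem purity_strict_decrease (d : ℕ) (hd : 0 < d)
    (ρ : Matrix (Fin d) (Fin d) ℂ)
    (hρ : IsDensityMatrix ρ)
    (hρne : ρ ≠ ((d : ℂ))⁻¹ • (1 : Matrix (Fin d) (Fin d) ℂ))
    (E : Matrix (Fin d) (Fin d) ℂ →ₗ[ℂ] Matrix (Fin d) (Fin d) ℂ)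
    (hTP : ∀ A, (E A).trace = A.trace)
    (hUnital : E 1 = 1)
    (hCP : IsCompletelyPositive E)
    (hPD : ∀ σ, IsDensityMatrix σ → (E σ).PosDef) :
    ((E ρ * E ρ).trace).re < ((ρ * ρ).trace).re :=
  purity_strict_decrease_general d ρ hρ hρne E hTP hUnital hPD
end

section
/- Let ρ = ∑_i p_i |i⟩⟨i| be the spectral decomposition of a density matrix on ℂ^d that is not the maximally mixed state (so there exist i ≠ i' with p_i ≠ p_{i'}), and let E be a completely positive map with E(|i⟩⟨i|) positive definite for all i. Then the 2d×2d block matrix [[E(ρ²), E(ρ)], [E(ρ), E(I)]] is positive definite. -/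
open Matrix ComplexOrder

/-!
With `Pᵢ = |vᵢ⟩⟨vᵢ|` and `Bᵢ = E(Pᵢ)`, orthonormality gives `ρ² = ∑ pᵢ² Pᵢ` and `1 = ∑ Pᵢ`, so
the block matrix is `∑ᵢ [[pᵢ², pᵢ], [pᵢ, 1]] ⊗ Bᵢ = ∑ᵢ Cᵢᴴ Bᵢ Cᵢ` with `Cᵢ = [pᵢ • 1, 1]`.
Each summand is positive semidefinite, and a vector `(a, b)` killed by every `Cᵢ` satisfies
`pᵢ a + b = 0` for all `i`; two distinct `pᵢ` force `a = b = 0`, so the sum is positive definite.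
-/

namespace Matrix

variable {ι l m n o R : Type*}

theorem fromBlocks_sum [AddCommMonoid R] (s : Finset ι) (A : ι → Matrix n l R)
    (B : ι → Matrix n m R) (C : ι → Matrix o l R) (D : ι → Matrix o m R) :
    fromBlocks (∑ i ∈ s, A i) (∑ i ∈ s, B i) (∑ i ∈ s, C i) (∑ i ∈ s, D i) =
      ∑ i ∈ s, fromBlocks (A i) (B i) (C i) (D i) := by
  ext (_ | _) (_ | _) <;> simp [sum_apply]

theorem posDef_sum_conjTranspose_mul_mul [CommRing R] [PartialOrder R] [StarRing R]
    [IsOrderedCancelAddMonoid R] [Fintype ι] [Fintype m] [Fintype n]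
    {B : ι → Matrix m m R} (C : ι → Matrix m n R) (hB : ∀ i, (B i).PosDef)
    (hC : ∀ x, (∀ i, C i *ᵥ x = 0) → x = 0) :
    (∑ i, (C i)ᴴ * B i * C i).PosDef := by
  refine PosDef.of_dotProduct_mulVec_pos (isSelfAdjoint_sum _ fun i _ =>
    isHermitian_conjTranspose_mul_mul _ (hB i).1) fun x hx => ?_
  have hform (i : ι) : star x ⬝ᵥ (((C i)ᴴ * B i * C i) *ᵥ x) =
      star (C i *ᵥ x) ⬝ᵥ (B i *ᵥ (C i *ᵥ x)) := by
    rw [← mulVec_mulVec, ← mulVec_mulVec, dotProduct_mulVec, star_mulVec]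
  obtain ⟨i, hi⟩ : ∃ i, C i *ᵥ x ≠ 0 := by
    by_contra! h
    exact hx (hC x h)
  rw [sum_mulVec, dotProduct_sum]
  simp only [hform]
  exact Finset.sum_pos' (fun j _ => (hB j).posSemidef.dotProduct_mulVec_nonneg _)
    ⟨i, Finset.mem_univ i, (hB i).dotProduct_mulVec_pos hi⟩

theorem fromBlocks_sq_smul_eq_conjTranspose_mul_mul [CommRing R] [StarRing R] [Fintype m]
    [DecidableEq m] {c : R} (hc : IsSelfAdjoint c) (B : Matrix m m R) :
    fromBlocks (c ^ 2 • B) (c • B) (c • B) B =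
      (fromCols (c • 1 : Matrix m m R) 1)ᴴ * B * fromCols (c • 1 : Matrix m m R) 1 := by
  rw [conjTranspose_fromCols_eq_fromRows_conjTranspose, fromRows_mul, fromRows_mul_fromCols]
  simp only [conjTranspose_smul, conjTranspose_one, hc.star_eq, smul_mul_assoc, mul_smul_comm,
    one_mul, mul_one, smul_smul, sq]

theorem fromCols_smul_one_one_mulVec [CommRing R] [Fintype m] [DecidableEq m] (c : R)
    (x : m ⊕ m → R) :
    fromCols (c • 1 : Matrix m m R) 1 *ᵥ x = c • (x ∘ Sum.inl) + x ∘ Sum.inr := by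
  simp [smul_mulVec]

theorem posDef_fromBlocks_sum_sq_smul {K : Type*} [Field K] [PartialOrder K] [StarRing K]
    [IsOrderedCancelAddMonoid K] [Fintype ι] [Fintype m] [DecidableEq m]
    {c : ι → K} (hc : ∀ i, IsSelfAdjoint (c i)) (hc_ne : ∃ i j, c i ≠ c j)
    {B : ι → Matrix m m K} (hB : ∀ i, (B i).PosDef) :
    (fromBlocks (∑ i, c i ^ 2 • B i) (∑ i, c i • B i) (∑ i, c i • B i) (∑ i, B i)).PosDef := by
  rw [fromBlocks_sum, Finset.sum_congr rfl fun i _ =>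
    fromBlocks_sq_smul_eq_conjTranspose_mul_mul (hc i) (B i)]
  refine posDef_sum_conjTranspose_mul_mul (fun i => fromCols (c i • 1 : Matrix m m K) 1) hB
    fun x hx => ?_
  simp only [fromCols_smul_one_one_mulVec] at hx
  obtain ⟨i, j, hij⟩ := hc_ne
  have hinl : x ∘ Sum.inl = 0 := by
    have : (c i - c j) • (x ∘ Sum.inl) = 0 := by
      rw [sub_smul, ← add_sub_add_right_eq_sub _ _ (x ∘ Sum.inr), hx i, hx j, sub_zero]
    exact (smul_eq_zero.mp this).resolve_left (sub_ne_zero.mpr hij)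
  have hinr : x ∘ Sum.inr = 0 := by simpa [hinl] using hx i
  ext (k | k)
  · exact congrFun hinl k
  · exact congrFun hinr k

section Orthonormal

variable [CommRing R] [StarRing R] [Fintype n] [DecidableEq ι] {v : ι → n → R}

theorem vecMulVec_star_mul_vecMulVec_star_of_orthonormal
    (hv : ∀ i j, star (v i) ⬝ᵥ v j = if i = j then 1 else 0) (i j : ι) :
    vecMulVec (v i) (star (v i)) * vecMulVec (v j) (star (v j)) =
      if i = j then vecMulVec (v i) (star (v i)) else 0 := by
  rw [vecMulVec_mul_vecMulVec, hv]
  split_ifs with h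
  · rw [h, one_smul]
  · rw [zero_smul, vecMulVec_zero]

theorem sum_smul_vecMulVec_star_mul_sum_smul_vecMulVec_star [Fintype ι]
    (hv : ∀ i j, star (v i) ⬝ᵥ v j = if i = j then 1 else 0) (a b : ι → R) :
    (∑ i, a i • vecMulVec (v i) (star (v i))) * (∑ i, b i • vecMulVec (v i) (star (v i))) =
      ∑ i, (a i * b i) • vecMulVec (v i) (star (v i)) := by
  simp_rw [Finset.sum_mul_sum, smul_mul_smul_comm,
    vecMulVec_star_mul_vecMulVec_star_of_orthonormal hv, smul_ite, smul_zero,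
    Finset.sum_ite_eq, Finset.mem_univ, if_true]

end Orthonormal

theorem sum_vecMulVec_star_eq_one_of_orthonormal [CommRing R] [StarRing R] [Fintype n]
    [DecidableEq n] {v : n → n → R}
    (hv : ∀ i j, star (v i) ⬝ᵥ v j = if i = j then 1 else 0) :
    ∑ i, vecMulVec (v i) (star (v i)) = 1 := by
  set W : Matrix n n R := of fun i k => star (v i k)
  have hW : W * Wᴴ = 1 := by
    ext i j
    simpa [W, mul_apply, one_apply, dotProduct] using hv i j
  rw [← mul_eq_one_comm.mp hW]
  ext k l
  simp [W, mul_apply, sum_apply, vecMulVec_apply]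

end Matrix

theorem block_matrix_posDef_general (d : ℕ)
    (p : Fin d → ℝ) (v : Fin d → (Fin d → ℂ))
    (h_orthonormal : ∀ i j, dotProduct (star (v i)) (v j) = if i = j then 1 else 0)
    (hp_distinct : ∃ i i', i ≠ i' ∧ p i ≠ p i')
    (ρ : Matrix (Fin d) (Fin d) ℂ)
    (hρ : ρ = ∑ i, (p i : ℂ) • vecMulVec (v i) (star (v i)))
    (E : Matrix (Fin d) (Fin d) ℂ →ₗ[ℂ] Matrix (Fin d) (Fin d) ℂ)
    (hPD : ∀ i, (E (vecMulVec (v i) (star (v i)))).PosDef) :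
    (Matrix.fromBlocks (E (ρ * ρ)) (E ρ) (E ρ) (E 1)).PosDef := by
  have hρρ : ρ * ρ = ∑ i, (p i : ℂ) ^ 2 • vecMulVec (v i) (star (v i)) := by
    simp only [hρ, sum_smul_vecMulVec_star_mul_sum_smul_vecMulVec_star h_orthonormal, sq]
  have hone : (1 : Matrix (Fin d) (Fin d) ℂ) = ∑ i, vecMulVec (v i) (star (v i)) :=
    (sum_vecMulVec_star_eq_one_of_orthonormal h_orthonormal).symm
  obtain ⟨i, i', -, hii'⟩ := hp_distinct
  rw [hρρ, hone, hρ]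
  simp only [map_sum, map_smul]
  exact posDef_fromBlocks_sum_sq_smul (fun i => Complex.conj_ofReal (p i))
    ⟨i, i', by exact_mod_cast hii'⟩ hPD

/-- If `ρ = ∑ pᵢ |i⟩⟨i|` is the spectral decomposition of a density matrix with two
distinct eigenvalues, and `E` is completely positive with `E(|i⟩⟨i|)` positive definite
for all `i`, then the block matrix `[[E(ρ²), E(ρ)], [E(ρ), E(I)]]` is positive definite. -/
theorem block_matrix_posDef (d : ℕ)
    (p : Fin d → ℝ) (v : Fin d → (Fin d → ℂ))
    (hp_nonneg : ∀ i, 0 ≤ p i)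
    (hp_sum : ∑ i, p i = 1)
    (h_orthonormal : ∀ i j, dotProduct (star (v i)) (v j) = if i = j then 1 else 0)
    (hp_distinct : ∃ i i', i ≠ i' ∧ p i ≠ p i')
    (ρ : Matrix (Fin d) (Fin d) ℂ)
    (hρ : ρ = ∑ i, (p i : ℂ) • vecMulVec (v i) (star (v i)))
    (E : Matrix (Fin d) (Fin d) ℂ →ₗ[ℂ] Matrix (Fin d) (Fin d) ℂ)
    (hCP : IsCompletelyPositive E)
    (hPD : ∀ i, (E (vecMulVec (v i) (star (v i)))).PosDef) :
    (Matrix.fromBlocks (E (ρ * ρ)) (E ρ) (E ρ) (E 1)).PosDef :=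
  block_matrix_posDef_general d p v h_orthonormal hp_distinct ρ hρ E hPD
end

section
/- Let E be a linear, trace-preserving, unital, completely positive map on d×d matrices (d = 2^n) with E(σ) positive definite for all density matrices σ, and let A be the (d²-1)-dimensional real matrix defined by A_{ij} = (1/d) tr[P_i E(P_j)] where {P_i} are the non-identity Pauli strings. Then ‖A θ‖ < ‖θ‖ for every nonzero θ ∈ ℝ^{d²-1}; in particular the operator norm of A is strictly less than 1. -/
/-!
Put `Θ = ∑ θᵢ Pᵢ`, a nonzero traceless Hermitian matrix with `tr(Θ²) = 2ⁿ ‖θ‖²`. Since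
`(Aθ)ᵢ = 2⁻ⁿ tr(Pᵢ E(Θ))`, Bessel's inequality for the orthogonal family `Pᵢ` gives
`2ⁿ ‖Aθ‖² ≤ tr(E(Θ)²)`, and the Kadison–Schwarz inequality `E(Θ²) ≥ E(Θ)²` together with trace
preservation gives `tr(E(Θ)²) ≤ tr(Θ²)`.

This last inequality is strict. Otherwise the nonnegative quadratic form
`Z ↦ ‖Z‖₂² - ‖E Z‖₂²` vanishes at `Θ`, hence so does its polarization at `Θ`; evaluated at the
projector `Q` onto an eigenvector for the smallest eigenvalue `λ` of `Θ` this reads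
`tr(E(Θ) E(Q)) = tr(Θ Q) = λ`. But `E(Θ) - λ = E(Θ - λ)` is positive semidefinite and nonzero
and `E(Q)` is positive definite, so `tr((E(Θ) - λ) E(Q)) > 0`, whereas it equals `λ - λ = 0`.
-/

open Matrix ComplexOrder

open scoped MatrixOrder

namespace Matrix

variable {ι n : Type*}

theorem isHermitian_sum_smul [Fintype ι] {P : ι → Matrix n n ℂ} (hHerm : ∀ i, (P i).IsHermitian)
    (c : ι → ℝ) : (∑ i, (c i : ℂ) • P i).IsHermitian :=
  isSelfAdjoint_sum _ fun i _ => (hHerm i).smul (Complex.conj_ofReal (c i))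

variable [Fintype n]

theorem re_trace_conjTranspose_mul_comm (X Y : Matrix n n ℂ) :
    (Yᴴ * X).trace.re = (Xᴴ * Y).trace.re := by
  rw [← conjTranspose_conjTranspose X, ← conjTranspose_mul, trace_conjTranspose,
    conjTranspose_conjTranspose, Complex.star_def, Complex.conj_re]

theorem re_trace_conjTranspose_mul_self_add_smul (X Y : Matrix n n ℂ) (t : ℝ) :
    ((X + (t : ℂ) • Y)ᴴ * (X + (t : ℂ) • Y)).trace.re =
      (Xᴴ * X).trace.re + 2 * t * (Xᴴ * Y).trace.re + t ^ 2 * (Yᴴ * Y).trace.re := by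
  have hYX := re_trace_conjTranspose_mul_comm X Y
  simp only [conjTranspose_add, conjTranspose_smul, Complex.star_def, Complex.conj_ofReal,
    add_mul, mul_add, Matrix.smul_mul, Matrix.mul_smul, trace_add, trace_smul, smul_eq_mul,
    Complex.add_re, Complex.re_ofReal_mul] at hYX ⊢
  rw [hYX]
  ring

theorem PosSemidef.re_trace_mul_pos [DecidableEq n] {M N : Matrix n n ℂ}
    (hM : M.PosSemidef) (hM0 : M ≠ 0) (hN : N.PosDef) : 0 < (M * N).trace.re := by
  obtain ⟨S, hS, rfl⟩ :=
    CStarAlgebra.isStrictlyPositive_iff_eq_star_mul_self.mp hN.isStrictlyPositive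
  have hSMS : (S * M * Sᴴ).PosSemidef := hM.mul_mul_conjTranspose_same S
  have hSMS0 : S * M * Sᴴ ≠ 0 := by
    rwa [Ne, ← star_eq_conjTranspose, hS.star.mul_left_eq_zero, hS.mul_right_eq_zero]
  have htr : (M * (star S * S)).trace = (S * M * Sᴴ).trace := by
    rw [← Matrix.mul_assoc, trace_mul_comm, ← Matrix.mul_assoc, star_eq_conjTranspose]
  rw [htr]
  exact (Complex.lt_def.mp <|
    hSMS.trace_nonneg.lt_of_ne' <| hSMS.trace_eq_zero_iff.not.mpr hSMS0).1

theorem IsHermitian.exists_eigenvector_posSemidef_sub_smul [DecidableEq n] [Nonempty n]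
    {A : Matrix n n ℂ} (hA : A.IsHermitian) :
    ∃ (lam : ℝ) (v : n → ℂ), star v ⬝ᵥ v = 1 ∧ A *ᵥ v = (lam : ℂ) • v ∧
      (A - (lam : ℂ) • 1).PosSemidef := by
  obtain ⟨i, -, hi⟩ := Finset.univ.exists_min_image hA.eigenvalues Finset.univ_nonempty
  refine ⟨hA.eigenvalues i, hA.eigenvectorBasis i, ?_, ?_, ?_⟩
  · have h := hA.eigenvectorBasis.orthonormal.1 i
    rw [dotProduct_comm, ← EuclideanSpace.inner_eq_star_dotProduct, inner_self_eq_norm_sq_to_K, h]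
    norm_num
  · rw [hA.mulVec_eigenvectorBasis, Complex.coe_smul]
  · have h := algebraMap_le_of_le_spectrum (R := ℝ) (a := A) (r := hA.eigenvalues i) ?_
      hA.isSelfAdjoint
    · rwa [le_iff, Algebra.algebraMap_eq_smul_one, ← Complex.coe_smul] at h
    · rw [hA.spectrum_real_eq_range_eigenvalues]
      rintro _ ⟨j, rfl⟩
      exact hi j (Finset.mem_univ j)

section OrthogonalFamily

variable [Fintype ι] {P : ι → Matrix n n ℂ} {D : ℝ}

theorem trace_mul_sum_smul [DecidableEq ι]
    (hOrth : ∀ i j, (P i * P j).trace = if i = j then (D : ℂ) else 0)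
    (c : ι → ℂ) (j : ι) : (P j * ∑ i, c i • P i).trace = D * c j := by
  simp [Finset.mul_sum, trace_sum, Matrix.mul_smul, trace_smul, hOrth, mul_comm]

theorem sum_smul_ne_zero [DecidableEq ι]
    (hOrth : ∀ i j, (P i * P j).trace = if i = j then (D : ℂ) else 0) (hD : D ≠ 0)
    {c : ι → ℝ} (hc : c ≠ 0) : ∑ i, (c i : ℂ) • P i ≠ 0 := by
  obtain ⟨j, hj⟩ := Function.ne_iff.mp hc
  intro h0
  have h := trace_mul_sum_smul hOrth (fun i => (c i : ℂ)) j
  simp only [h0, Matrix.mul_zero, trace_zero, zero_eq_mul, Complex.ofReal_eq_zero] at h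
  exact h.elim hD hj

noncomputable def transferMatrix (E : Matrix n n ℂ →ₗ[ℂ] Matrix n n ℂ) (P : ι → Matrix n n ℂ)
    (D : ℝ) : Matrix ι ι ℝ :=
  of fun i j => ((D : ℂ)⁻¹ * (P i * E (P j)).trace).re

theorem transferMatrix_mulVec_apply (E : Matrix n n ℂ →ₗ[ℂ] Matrix n n ℂ) (θ : ι → ℝ) (i : ι) :
    (transferMatrix E P D *ᵥ θ) i = (P i * E (∑ j, (θ j : ℂ) • P j)).trace.re / D := by
  simp only [transferMatrix, mulVec, dotProduct, of_apply, ← Complex.ofReal_inv,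
    Complex.re_ofReal_mul, map_sum, map_smul, Finset.mul_sum, Matrix.mul_smul, trace_sum,
    trace_smul, smul_eq_mul, Complex.re_sum, Finset.sum_div]
  exact Finset.sum_congr rfl fun j _ => by field_simp

theorem re_trace_conjTranspose_mul_sum_smul (hHerm : ∀ i, (P i).IsHermitian)
    (X : Matrix n n ℂ) (c : ι → ℝ) :
    (Xᴴ * ∑ i, (c i : ℂ) • P i).trace.re = ∑ i, c i * (P i * X).trace.re := by
  simp only [Finset.mul_sum, trace_sum, Complex.re_sum, Matrix.mul_smul, trace_smul, smul_eq_mul,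
    Complex.re_ofReal_mul, re_trace_conjTranspose_mul_comm (P _) X, (hHerm _).eq]

theorem re_trace_conjTranspose_mul_self_sum_smul [DecidableEq ι] (hHerm : ∀ i, (P i).IsHermitian)
    (hOrth : ∀ i j, (P i * P j).trace = if i = j then (D : ℂ) else 0) (c : ι → ℝ) :
    ((∑ i, (c i : ℂ) • P i)ᴴ * ∑ i, (c i : ℂ) • P i).trace.re = D * ∑ i, c i ^ 2 := by
  rw [re_trace_conjTranspose_mul_sum_smul hHerm, Finset.mul_sum]
  refine Finset.sum_congr rfl fun i _ => ?_
  rw [trace_mul_sum_smul hOrth, ← Complex.ofReal_mul, Complex.ofReal_re]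
  ring

theorem sum_sq_re_trace_mul_le [DecidableEq ι] (hHerm : ∀ i, (P i).IsHermitian)
    (hOrth : ∀ i j, (P i * P j).trace = if i = j then (D : ℂ) else 0) (hD : 0 < D)
    (X : Matrix n n ℂ) : ∑ i, (P i * X).trace.re ^ 2 ≤ D * (Xᴴ * X).trace.re := by
  set c : ι → ℝ := fun i => (P i * X).trace.re / D
  have hc : ∀ i, (P i * X).trace.re = D * c i := fun i => by
    simp only [c]
    field_simp
  have hR := (Complex.le_def.mp
    (posSemidef_conjTranspose_mul_self (X + ((-1 : ℝ) : ℂ) • ∑ i, (c i : ℂ) • P i)).trace_nonneg).1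
  rw [re_trace_conjTranspose_mul_self_add_smul, re_trace_conjTranspose_mul_sum_smul hHerm,
    re_trace_conjTranspose_mul_self_sum_smul hHerm hOrth, Complex.zero_re] at hR
  have hcross : ∑ i, c i * (P i * X).trace.re = D * ∑ i, c i ^ 2 := by
    rw [Finset.mul_sum]
    exact Finset.sum_congr rfl fun i _ => by rw [hc]; ring
  have hsq : ∑ i, (P i * X).trace.re ^ 2 = D * (D * ∑ i, c i ^ 2) := by
    rw [← hcross, Finset.mul_sum]
    exact Finset.sum_congr rfl fun i _ => by rw [hc]; ring
  rw [hsq]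
  exact mul_le_mul_of_nonneg_left (by linarith) hD.le

end OrthogonalFamily

end Matrix

namespace IsCompletelyPositive

variable {d : ℕ} {E : Matrix (Fin d) (Fin d) ℂ →ₗ[ℂ] Matrix (Fin d) (Fin d) ℂ}

theorem posSemidef_gram (hE : IsCompletelyPositive E) {k : ℕ}
    (F : Fin k → Matrix (Fin d) (Fin d) ℂ) :
    (Matrix.of fun p q : Fin k × Fin d => E ((F p.1)ᴴ * F q.1) p.2 q.2).PosSemidef := by
  let C : Matrix (Fin 1 × Fin d) (Fin k × Fin d) ℂ := Matrix.of fun p q => F q.1 p.2 q.2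
  convert hE k _ (posSemidef_conjTranspose_mul_self C) using 1
  ext p q
  simp only [amplify, of_apply]
  suffices h : (of fun i j => (Cᴴ * C) (p.1, i) (q.1, j)) = (F p.1)ᴴ * F q.1 by rw [h]
  ext i j
  simp [C, Matrix.mul_apply, Fintype.sum_prod_type]

theorem map_conjTranspose (hE : IsCompletelyPositive E) (A : Matrix (Fin d) (Fin d) ℂ) :
    E Aᴴ = (E A)ᴴ := by
  ext a b
  simpa using (congrFun₂ (hE.posSemidef_gram ![A, 1]).isHermitian (0, a) (1, b)).symm

theorem map_posSemidef (hE : IsCompletelyPositive E) {X : Matrix (Fin d) (Fin d) ℂ}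
    (hX : X.PosSemidef) : (E X).PosSemidef := by
  convert (hE 1 _ (hX.submatrix Prod.snd)).submatrix fun a : Fin d => ((0 : Fin 1), a) using 1
  ext a b
  rfl

theorem posSemidef_map_conjTranspose_mul_self_sub (hE : IsCompletelyPositive E) (hU : E 1 = 1)
    (A : Matrix (Fin d) (Fin d) ℂ) : (E (Aᴴ * A) - (E A)ᴴ * E A).PosSemidef := by
  let blocks : Fin d ⊕ Fin d → Fin 2 × Fin d := Sum.elim ((0, ·)) ((1, ·))
  have h := (hE.posSemidef_gram ![A, 1]).submatrix blocks
  have hblocks : (Matrix.of fun p q : Fin 2 × Fin d =>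
      E ((![A, 1] p.1)ᴴ * ![A, 1] q.1) p.2 q.2).submatrix blocks blocks =
      fromBlocks (E (Aᴴ * A)) (E A)ᴴ (E A)ᴴᴴ 1 := by
    ext (a | a) (b | b) <;> simp [blocks, hU, hE.map_conjTranspose]
  let _ : Invertible (1 : Matrix (Fin d) (Fin d) ℂ) := invertibleOne
  rwa [hblocks, PosDef.fromBlocks₂₂ (D := 1) _ _ PosDef.one, inv_one, Matrix.mul_one,
    conjTranspose_conjTranspose] at h

theorem re_trace_map_conjTranspose_mul_self_le (hE : IsCompletelyPositive E) (hU : E 1 = 1)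
    (hTP : ∀ A, (E A).trace = A.trace) (A : Matrix (Fin d) (Fin d) ℂ) :
    ((E A)ᴴ * E A).trace.re ≤ (Aᴴ * A).trace.re := by
  have h := (Complex.le_def.mp (hE.posSemidef_map_conjTranspose_mul_self_sub hU A).trace_nonneg).1
  rw [trace_sub, hTP, Complex.sub_re, Complex.zero_re] at h
  linarith

theorem re_trace_map_conjTranspose_mul_eq_of_eq (hE : IsCompletelyPositive E) (hU : E 1 = 1)
    (hTP : ∀ A, (E A).trace = A.trace) {C : Matrix (Fin d) (Fin d) ℂ}
    (hC : ((E C)ᴴ * E C).trace.re = (Cᴴ * C).trace.re) (Y : Matrix (Fin d) (Fin d) ℂ) :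
    ((E C)ᴴ * E Y).trace.re = (Cᴴ * Y).trace.re := by
  set b := (Cᴴ * Y).trace.re - ((E C)ᴴ * E Y).trace.re
  have hquad : ∀ t : ℝ,
      0 ≤ ((Yᴴ * Y).trace.re - ((E Y)ᴴ * E Y).trace.re) * (t * t) + 2 * b * t + 0 := by
    intro t
    have h := hE.re_trace_map_conjTranspose_mul_self_le hU hTP (C + (t : ℂ) • Y)
    rw [map_add, map_smul, re_trace_conjTranspose_mul_self_add_smul,
      re_trace_conjTranspose_mul_self_add_smul] at h
    linear_combination h - hC
  have hb := discrim_le_zero hquad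
  rw [discrim] at hb
  nlinarith [sq_nonneg b]

theorem re_trace_map_conjTranspose_mul_self_lt (hE : IsCompletelyPositive E) (hU : E 1 = 1)
    (hTP : ∀ A, (E A).trace = A.trace) (hPD : ∀ σ, IsDensityMatrix σ → (E σ).PosDef)
    {Θ : Matrix (Fin d) (Fin d) ℂ} (hΘ : Θ.IsHermitian) (htr : Θ.trace = 0) (hne : Θ ≠ 0) :
    ((E Θ)ᴴ * E Θ).trace.re < (Θᴴ * Θ).trace.re := by
  refine (hE.re_trace_map_conjTranspose_mul_self_le hU hTP Θ).lt_of_ne fun heq => ?_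
  have hd : d ≠ 0 := by
    rintro rfl
    exact hne (Subsingleton.elim _ _)
  have : NeZero d := ⟨hd⟩
  obtain ⟨lam, v, hv, hΘv, hB⟩ := hΘ.exists_eigenvector_posSemidef_sub_smul
  set Q := vecMulVec v (star v)
  have hQ : IsDensityMatrix Q :=
    ⟨posSemidef_vecMulVec_self_star v, by rw [trace_vecMulVec, dotProduct_comm, hv]⟩
  have hΘQ : (Θᴴ * Q).trace.re = lam := by
    rw [hΘ.eq, mul_vecMulVec, hΘv, smul_vecMulVec, trace_smul, hQ.2]
    simp
  have hM := hE.map_posSemidef hB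
  have hM0 : E (Θ - (lam : ℂ) • 1) ≠ 0 := by
    intro h0
    have hΘlam : Θ = (lam : ℂ) • 1 :=
      sub_eq_zero.mp <| hB.trace_eq_zero_iff.mp (by rw [← hTP, h0, trace_zero])
    have hlam : (lam : ℂ) = 0 := by
      simpa [hΘlam, hd] using htr
    exact hne (by rw [hΘlam, hlam, zero_smul])
  have hpos := hM.re_trace_mul_pos hM0 (hPD Q hQ)
  rw [← hM.isHermitian.eq, map_sub, map_smul, hU, conjTranspose_sub, conjTranspose_smul,
    Matrix.sub_mul, Matrix.smul_mul, trace_sub, trace_smul, conjTranspose_one, Matrix.one_mul,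
    hTP, hQ.2, Complex.sub_re, hE.re_trace_map_conjTranspose_mul_eq_of_eq hU hTP heq, hΘQ] at hpos
  simp at hpos

end IsCompletelyPositive

theorem pauli_transfer_matrix_contraction_general (n : ℕ)
    (P : Fin (4 ^ n - 1) → Matrix (Fin (2 ^ n)) (Fin (2 ^ n)) ℂ)
    (hHerm : ∀ i, (P i).IsHermitian)
    (hTr0 : ∀ i, (P i).trace = 0)
    (hOrth : ∀ i j, (P i * P j).trace = if i = j then ((2 : ℂ) ^ n) else 0)
    (E : Matrix (Fin (2 ^ n)) (Fin (2 ^ n)) ℂ →ₗ[ℂ] Matrix (Fin (2 ^ n)) (Fin (2 ^ n)) ℂ)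
    (hTP : ∀ A, (E A).trace = A.trace)
    (hUnital : E 1 = 1)
    (hCP : IsCompletelyPositive E)
    (hPD : ∀ σ, IsDensityMatrix σ → (E σ).PosDef)
    (A : Matrix (Fin (4 ^ n - 1)) (Fin (4 ^ n - 1)) ℝ)
    (hA : A = Matrix.of fun i j => (((2 : ℂ) ^ n)⁻¹ * (P i * E (P j)).trace).re)
    (θ : Fin (4 ^ n - 1) → ℝ) (hθ : θ ≠ 0) :
    ∑ i, (A.mulVec θ i) ^ 2 < ∑ i, (θ i) ^ 2 := by
  set D : ℝ := 2 ^ n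
  have hD : 0 < D := by positivity
  have hOrthD : ∀ i j, (P i * P j).trace = if i = j then (D : ℂ) else 0 := by
    simpa [D] using hOrth
  have hAD : A = transferMatrix E P D := by simp [hA, transferMatrix, D]
  set Θ := ∑ i, (θ i : ℂ) • P i
  have hΘ : Θ.IsHermitian := isHermitian_sum_smul hHerm θ
  have hΘtr : Θ.trace = 0 := by simp [Θ, trace_sum, trace_smul, hTr0]
  have hΘne : Θ ≠ 0 := sum_smul_ne_zero hOrthD hD.ne' hθ
  calc ∑ i, (A.mulVec θ i) ^ 2 = (∑ i, (P i * E Θ).trace.re ^ 2) / D ^ 2 := by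
        simp [hAD, transferMatrix_mulVec_apply, div_pow, Finset.sum_div, Θ]
    _ ≤ D * ((E Θ)ᴴ * E Θ).trace.re / D ^ 2 := by
        gcongr
        exact sum_sq_re_trace_mul_le hHerm hOrthD hD _
    _ < D * (Θᴴ * Θ).trace.re / D ^ 2 := by
        gcongr
        exact hCP.re_trace_map_conjTranspose_mul_self_lt hUnital hTP hPD hΘ hΘtr hΘne
    _ = ∑ i, θ i ^ 2 := by
        rw [re_trace_conjTranspose_mul_self_sum_smul hHerm hOrthD θ]
        field_simp

/-- The unital part of the Pauli transfer matrix strictly contracts the generalized Bloch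
vector: `‖A θ‖ < ‖θ‖` for every nonzero `θ`, where `A_{ij} = (1/2^n) tr[Pᵢ E(Pⱼ)]` and
`{Pᵢ}` are the nontrivial `n`-qubit Pauli strings (traceless, Hermitian, orthogonal with
`tr[Pᵢ Pⱼ] = 2^n δ_{ij}`). -/
theorem pauli_transfer_matrix_contraction (n : ℕ) (hn : 0 < n)
    (P : Fin (4 ^ n - 1) → Matrix (Fin (2 ^ n)) (Fin (2 ^ n)) ℂ)
    (hHerm : ∀ i, (P i).IsHermitian)
    (hTr0 : ∀ i, (P i).trace = 0)
    (hOrth : ∀ i j, (P i * P j).trace = if i = j then ((2 : ℂ) ^ n) else 0)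
    (E : Matrix (Fin (2 ^ n)) (Fin (2 ^ n)) ℂ →ₗ[ℂ] Matrix (Fin (2 ^ n)) (Fin (2 ^ n)) ℂ)
    (hTP : ∀ A, (E A).trace = A.trace)
    (hUnital : E 1 = 1)
    (hCP : IsCompletelyPositive E)
    (hPD : ∀ σ, IsDensityMatrix σ → (E σ).PosDef)
    (A : Matrix (Fin (4 ^ n - 1)) (Fin (4 ^ n - 1)) ℝ)
    (hA : A = Matrix.of fun i j => (((2 : ℂ) ^ n)⁻¹ * (P i * E (P j)).trace).re)
    (θ : Fin (4 ^ n - 1) → ℝ) (hθ : θ ≠ 0) :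
    ∑ i, (A.mulVec θ i) ^ 2 < ∑ i, (θ i) ^ 2 :=
  pauli_transfer_matrix_contraction_general n P hHerm hTr0 hOrth E hTP hUnital hCP hPD A hA θ hθ
end

section
/- Let E_1, ..., E_L be unital, trace-preserving completely positive maps on 2^n × 2^n matrices such that for each l and every density matrix ρ, E_l(ρ) − (β/2^n) I is positive semidefinite, where 0 < β < 1. Then for every density matrix ρ, the composition satisfies E_L ∘ ⋯ ∘ E_1(ρ) = (1 − (1−β)^L) I/2^n + (1−β)^L ρ' for some density matrix ρ'; in particular E_L ∘ ⋯ ∘ E_1(ρ) − ((1−(1−β)^L)/2^n) I is positive semidefinite. -/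
open Matrix ComplexOrder

/-- The composition `E_L ∘ ⋯ ∘ E_1` of a finite family of linear maps. -/
noncomputable def compChain {d : ℕ} :
    (L : ℕ) → (Fin L → (Matrix (Fin d) (Fin d) ℂ →ₗ[ℂ] Matrix (Fin d) (Fin d) ℂ)) →
    (Matrix (Fin d) (Fin d) ℂ →ₗ[ℂ] Matrix (Fin d) (Fin d) ℂ)
  | 0, _ => LinearMap.id
  | (L + 1), E => (E (Fin.last L)) ∘ₗ compChain L (fun l => E l.castSucc)

/-! Subtracting the floor `β I/d` from the output of a trace-preserving map on a state leaves
a positive matrix of trace `1 - β`, i.e. `(1 - β)` times a state. Since each map is unital, the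
maximally mixed part of `(1 - p) I/d + p σ` passes through unchanged, so the state's weight `p`
is multiplied by `1 - β` at every step. -/

variable {d : ℕ}

theorem compChain_succ_apply (L : ℕ)
    (E : Fin (L + 1) → (Matrix (Fin d) (Fin d) ℂ →ₗ[ℂ] Matrix (Fin d) (Fin d) ℂ))
    (ρ : Matrix (Fin d) (Fin d) ℂ) :
    compChain (L + 1) E ρ = E (Fin.last L) (compChain L (fun l => E l.castSucc) ρ) :=
  rfl

theorem IsDensityMatrix.dim_ne_zero {ρ : Matrix (Fin d) (Fin d) ℂ} (hρ : IsDensityMatrix ρ) :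
    d ≠ 0 := by
  rintro rfl
  simpa using hρ.2

theorem exists_isDensityMatrix_map_eq_floor_add {β : ℝ} (hβ1 : β < 1)
    {E : Matrix (Fin d) (Fin d) ℂ →ₗ[ℂ] Matrix (Fin d) (Fin d) ℂ}
    (hTP : ∀ A, (E A).trace = A.trace)
    (hFloor : ∀ ρ, IsDensityMatrix ρ → (E ρ - ((β / d : ℝ) : ℂ) • 1).PosSemidef)
    {σ : Matrix (Fin d) (Fin d) ℂ} (hσ : IsDensityMatrix σ) :
    ∃ σ' : Matrix (Fin d) (Fin d) ℂ, IsDensityMatrix σ' ∧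
      E σ = ((β / d : ℝ) : ℂ) • 1 + ((1 - β : ℝ) : ℂ) • σ' := by
  have hβ1' : ((1 - β : ℝ) : ℂ) ≠ 0 := by exact_mod_cast (sub_pos.mpr hβ1).ne'
  have hd : (d : ℂ) ≠ 0 := Nat.cast_ne_zero.mpr hσ.dim_ne_zero
  set D := E σ - ((β / d : ℝ) : ℂ) • 1
  refine ⟨(((1 - β)⁻¹ : ℝ) : ℂ) • D, ⟨(hFloor σ hσ).smul ?_, ?_⟩, ?_⟩
  · exact Complex.zero_le_real.mpr (inv_nonneg.mpr (sub_pos.mpr hβ1).le)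
  · have hD : D.trace = ((1 - β : ℝ) : ℂ) := by
      simp only [D, trace_sub, trace_smul, hTP, hσ.2, trace_one, Fintype.card_fin, smul_eq_mul]
      push_cast
      field_simp
    rw [trace_smul, hD, smul_eq_mul, Complex.ofReal_inv, inv_mul_cancel₀ hβ1']
  · rw [smul_smul, Complex.ofReal_inv, mul_inv_cancel₀ hβ1', one_smul, add_sub_cancel]

theorem exists_isDensityMatrix_compChain_eq {β : ℝ} (hβ1 : β < 1) (L : ℕ)
    (E : Fin L → (Matrix (Fin d) (Fin d) ℂ →ₗ[ℂ] Matrix (Fin d) (Fin d) ℂ))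
    (hUnital : ∀ l, E l 1 = 1)
    (hTP : ∀ l A, (E l A).trace = A.trace)
    (hFloor : ∀ l ρ, IsDensityMatrix ρ → (E l ρ - ((β / d : ℝ) : ℂ) • 1).PosSemidef)
    {ρ : Matrix (Fin d) (Fin d) ℂ} (hρ : IsDensityMatrix ρ) :
    ∃ ρ' : Matrix (Fin d) (Fin d) ℂ, IsDensityMatrix ρ' ∧
      compChain L E ρ = (((1 - (1 - β) ^ L) / d : ℝ) : ℂ) • 1 + (((1 - β) ^ L : ℝ) : ℂ) • ρ' := by
  induction L with
  | zero => exact ⟨ρ, hρ, by simp [compChain]⟩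
  | succ L ih =>
    obtain ⟨σ, hσ, hchain⟩ :=
      ih (fun l => E l.castSucc) (fun l => hUnital _) (fun l => hTP _) (fun l => hFloor _)
    obtain ⟨σ', hσ', hlast⟩ :=
      exists_isDensityMatrix_map_eq_floor_add hβ1 (hTP (Fin.last L)) (hFloor (Fin.last L)) hσ
    refine ⟨σ', hσ', ?_⟩
    rw [compChain_succ_apply, hchain, map_add, map_smul, map_smul, hUnital, hlast,
      smul_add, smul_smul, smul_smul, ← add_assoc, ← add_smul]
    congr 2 <;> push_cast <;> ring

theorem composed_noise_depolarizing_floor_general (n L : ℕ) (β : ℝ)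
    (hβ1 : β < 1)
    (E : Fin L → (Matrix (Fin (2 ^ n)) (Fin (2 ^ n)) ℂ →ₗ[ℂ]
      Matrix (Fin (2 ^ n)) (Fin (2 ^ n)) ℂ))
    (hUnital : ∀ l, E l 1 = 1)
    (hTP : ∀ l A, (E l A).trace = A.trace)
    (hFloor : ∀ l ρ, IsDensityMatrix ρ →
      (E l ρ - ((β / 2 ^ n : ℝ) : ℂ) • (1 : Matrix (Fin (2 ^ n)) (Fin (2 ^ n)) ℂ)).PosSemidef)
    (ρ : Matrix (Fin (2 ^ n)) (Fin (2 ^ n)) ℂ) (hρ : IsDensityMatrix ρ) :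
    (∃ ρ' : Matrix (Fin (2 ^ n)) (Fin (2 ^ n)) ℂ, IsDensityMatrix ρ' ∧
      compChain L E ρ = (((1 - (1 - β) ^ L) / 2 ^ n : ℝ) : ℂ) •
          (1 : Matrix (Fin (2 ^ n)) (Fin (2 ^ n)) ℂ)
        + (((1 - β) ^ L : ℝ) : ℂ) • ρ') ∧
    (compChain L E ρ - (((1 - (1 - β) ^ L) / 2 ^ n : ℝ) : ℂ) •
        (1 : Matrix (Fin (2 ^ n)) (Fin (2 ^ n)) ℂ)).PosSemidef := by
  obtain ⟨ρ', hρ', hdecomp⟩ :=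
    exists_isDensityMatrix_compChain_eq hβ1 L E hUnital hTP (by exact_mod_cast hFloor) hρ
  rw [Nat.cast_pow, Nat.cast_ofNat] at hdecomp
  refine ⟨⟨ρ', hρ', hdecomp⟩, ?_⟩
  rw [hdecomp, add_sub_cancel_left]
  exact hρ'.1.smul (Complex.zero_le_real.mpr (pow_nonneg (sub_pos.mpr hβ1).le L))

/-- If each unital trace-preserving completely positive `E_l` satisfies
`E_l(ρ) − (β/2^n) I ≥ 0` on density matrices, then the composition satisfies
`E_L ∘ ⋯ ∘ E_1(ρ) = (1 − (1−β)^L) I/2^n + (1−β)^L ρ'` for some density matrix `ρ'`;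
in particular `E_L ∘ ⋯ ∘ E_1(ρ) − ((1−(1−β)^L)/2^n) I` is positive semidefinite. -/
theorem composed_noise_depolarizing_floor (n L : ℕ) (β : ℝ)
    (hβ : 0 < β) (hβ1 : β < 1)
    (E : Fin L → (Matrix (Fin (2 ^ n)) (Fin (2 ^ n)) ℂ →ₗ[ℂ]
      Matrix (Fin (2 ^ n)) (Fin (2 ^ n)) ℂ))
    (hUnital : ∀ l, E l 1 = 1)
    (hTP : ∀ l A, (E l A).trace = A.trace)
    (hCP : ∀ l, IsCompletelyPositive (E l))
    (hFloor : ∀ l ρ, IsDensityMatrix ρ →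
      (E l ρ - ((β / 2 ^ n : ℝ) : ℂ) • (1 : Matrix (Fin (2 ^ n)) (Fin (2 ^ n)) ℂ)).PosSemidef)
    (ρ : Matrix (Fin (2 ^ n)) (Fin (2 ^ n)) ℂ) (hρ : IsDensityMatrix ρ) :
    (∃ ρ' : Matrix (Fin (2 ^ n)) (Fin (2 ^ n)) ℂ, IsDensityMatrix ρ' ∧
      compChain L E ρ = (((1 - (1 - β) ^ L) / 2 ^ n : ℝ) : ℂ) •
          (1 : Matrix (Fin (2 ^ n)) (Fin (2 ^ n)) ℂ)
        + (((1 - β) ^ L : ℝ) : ℂ) • ρ') ∧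
    (compChain L E ρ - (((1 - (1 - β) ^ L) / 2 ^ n : ℝ) : ℂ) •
        (1 : Matrix (Fin (2 ^ n)) (Fin (2 ^ n)) ℂ)).PosSemidef :=
  composed_noise_depolarizing_floor_general n L β hβ1 E hUnital hTP hFloor ρ hρ
end

section
/- Let E_p be the single-qubit dephasing channel E_p(ρ) = (1 − p/2)ρ + (p/2) ZρZ with 0 < p < 1. Then its inverse is E_p^{−1}(ρ) = ((2−p)/(2−2p))ρ − (p/(2−2p)) ZρZ, and ν(E_p^{−1}) := ((2−p)/(2−2p))² + (p/(2−2p))² = 1 + p + O(p²); more precisely ν(E_p^{−1}) ≥ 1 + p for 0 < p < 1. -/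
open Matrix

noncomputable section

/-- The Pauli Z matrix. -/
def pauliZ : Matrix (Fin 2) (Fin 2) ℂ := !![1, 0; 0, -1]

/-- The single-qubit dephasing channel `E_p(ρ) = (1 − p/2)ρ + (p/2) ZρZ`. -/
def dephasing (p : ℝ) (ρ : Matrix (Fin 2) (Fin 2) ℂ) : Matrix (Fin 2) (Fin 2) ℂ :=
  ((1 - p / 2 : ℝ) : ℂ) • ρ + ((p / 2 : ℝ) : ℂ) • (pauliZ * ρ * pauliZ)

/-- The candidate inverse of the dephasing channel:
`E_p⁻¹(ρ) = ((2−p)/(2−2p))ρ − (p/(2−2p)) ZρZ`. -/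
def dephasingInv (p : ℝ) (ρ : Matrix (Fin 2) (Fin 2) ℂ) : Matrix (Fin 2) (Fin 2) ℂ :=
  (((2 - p) / (2 - 2 * p) : ℝ) : ℂ) • ρ -
    ((p / (2 - 2 * p) : ℝ) : ℂ) • (pauliZ * ρ * pauliZ)

/-
Conjugation by the involution `Z` generates a copy of `ℤ/2`, so the maps `ρ ↦ aρ + b ZρZ`
compose like elements `a + bσ` of its group algebra (`σ² = 1`). There `c + dσ` has inverse
`(c - dσ)/(c² - d²)`; for the dephasing channel `c = 1 - p/2`, `d = p/2` and `c² - d² = 1 - p`,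
which gives the stated `E_p⁻¹`. The bound on `ν` is
`(2 - p)² + p² - (1 + p)(2 - 2p)² = 2p²(3 - 2p) ≥ 0`.
-/

section ConjComb

variable {k A : Type*} [CommSemiring k] [Semiring A] [Algebra k A]

def conjComb (z : A) (a b : k) (x : A) : A :=
  a • x + b • (z * x * z)

theorem conjComb_one_zero (z : A) (x : A) : conjComb z (1 : k) 0 x = x := by
  simp [conjComb]

theorem conjComb_conjComb {z : A} (hz : z * z = 1) (a b c d : k) (x : A) :
    conjComb z a b (conjComb z c d x) = conjComb z (a * c + b * d) (a * d + b * c) x := by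
  have hzz : z * (z * x * z) * z = x := by
    rw [← mul_assoc, ← mul_assoc, hz, one_mul, mul_assoc, hz, mul_one]
  simp only [conjComb, mul_add, add_mul, mul_smul_comm, smul_mul_assoc, smul_add, smul_smul,
    hzz, add_smul]
  abel

end ConjComb

theorem pauliZ_mul_self : pauliZ * pauliZ = 1 := by
  simp [pauliZ, ← Matrix.one_fin_two]

theorem dephasing_eq_conjComb (p : ℝ) :
    dephasing p = conjComb pauliZ (1 - p / 2) (p / 2) := by
  funext ρ
  simp only [dephasing, conjComb, Complex.coe_smul]

theorem dephasingInv_eq_conjComb (p : ℝ) :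
    dephasingInv p = conjComb pauliZ ((2 - p) / (2 - 2 * p)) (-(p / (2 - 2 * p))) := by
  funext ρ
  simp only [dephasingInv, conjComb, Complex.coe_smul, neg_smul, sub_eq_add_neg]

theorem one_add_le_sq_add_sq {p : ℝ} (hp : p < 1) :
    1 + p ≤ ((2 - p) / (2 - 2 * p)) ^ 2 + (p / (2 - 2 * p)) ^ 2 := by
  have hpos : 0 < (2 - 2 * p) ^ 2 := by nlinarith
  rw [div_pow, div_pow, ← add_div, le_div_iff₀ hpos]
  nlinarith [mul_nonneg (sq_nonneg p) (by linarith : (0 : ℝ) ≤ 3 - 2 * p)]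

theorem dephasing_inverse_nu_general (p : ℝ) (hp1 : p < 1) :
    (∀ ρ : Matrix (Fin 2) (Fin 2) ℂ, dephasingInv p (dephasing p ρ) = ρ) ∧
    (∀ ρ : Matrix (Fin 2) (Fin 2) ℂ, dephasing p (dephasingInv p ρ) = ρ) ∧
    1 + p ≤ ((2 - p) / (2 - 2 * p)) ^ 2 + (p / (2 - 2 * p)) ^ 2 := by
  have hp_ne_one : 1 - p ≠ 0 := by linarith
  refine ⟨fun ρ => ?_, fun ρ => ?_, one_add_le_sq_add_sq hp1⟩ <;>
  · rw [dephasing_eq_conjComb, dephasingInv_eq_conjComb, conjComb_conjComb pauliZ_mul_self]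
    convert conjComb_one_zero pauliZ ρ using 2 <;> field_simp <;> ring

/-- `dephasingInv p` is the (two-sided) inverse of the single-qubit dephasing channel,
and `ν(E_p⁻¹) = ((2−p)/(2−2p))² + (p/(2−2p))² = 1 + p + O(p²)`; more precisely
`ν(E_p⁻¹) ≥ 1 + p` for `0 < p < 1`. -/
theorem dephasing_inverse_nu (p : ℝ) (hp0 : 0 < p) (hp1 : p < 1) :
    (∀ ρ : Matrix (Fin 2) (Fin 2) ℂ, dephasingInv p (dephasing p ρ) = ρ) ∧
    (∀ ρ : Matrix (Fin 2) (Fin 2) ℂ, dephasing p (dephasingInv p ρ) = ρ) ∧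
    1 + p ≤ ((2 - p) / (2 - 2 * p)) ^ 2 + (p / (2 - 2 * p)) ^ 2 :=
  dephasing_inverse_nu_general p hp1

end
end
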